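/- Let Q ⊂ ℝ^d be a cube with center x_Q and side-length ℓ(Q), let f ∈ W^{k,1}(Q), and let P^k_Q f be the unique polynomial of degree ≤ k satisfying ∫_Q D^β P^k_Q f = ∫_Q D^β f for all |β| ≤ k. If P^k_Q f(y) = Σ_{|γ|≤k} m_{Q,γ}(y − x_Q)^γ is its Taylor expansion at x_Q, then for each multiindex γ with |γ| ≤ k, |m_{Q,γ}| ≤ c_k Σ_{j=|γ|}^{k} ‖∇^j f‖_{L¹(Q)} ℓ(Q)^{j−|γ|−d}, where c_k depends only on k and d. -/

import Mathlib

open MeasureTheory ENNReal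

/-- The finset of multiindices on `Fin d` of order exactly `j`. -/
noncomputable def multiIdxEq (d j : ℕ) : Finset (Fin d → ℕ) :=
  (Fintype.piFinset fun _ => Finset.range (j + 1)).filter fun β => ∑ i, β i = j

/-- Iterated partial derivative `D^β` of a multivariate polynomial. -/
noncomputable def mderiv (d : ℕ) (β : Fin d → ℕ) (P : MvPolynomial (Fin d) ℝ) :
    MvPolynomial (Fin d) ℝ :=
  (((List.finRange d).map fun i =>
      ((MvPolynomial.pderiv i).toLinearMap : Module.End ℝ (MvPolynomial (Fin d) ℝ)) ^ (β i)).prod) P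

/-- `g` is the weak `i`-th partial derivative of `f` on the open set `U`. -/
def HasWeakDerivOn {d : ℕ} (U : Set (Fin d → ℝ)) (f g : (Fin d → ℝ) → ℝ) (i : Fin d) : Prop :=
  ∀ φ : (Fin d → ℝ) → ℝ, ContDiff ℝ (⊤ : ℕ∞) φ → HasCompactSupport φ → tsupport φ ⊆ U →
    ∫ x in U, f x * fderiv ℝ φ x (Pi.single i 1) = - ∫ x in U, g x * φ x

namespace Stmt3Aux

open MvPolynomial

variable {d : ℕ}

noncomputable def Bpoly (c : Fin d → ℝ) (δ : Fin d → ℕ) : MvPolynomial (Fin d) ℝ :=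
  ∏ i, (X i - C (c i)) ^ δ i

lemma eval_Bpoly (c : Fin d → ℝ) (δ : Fin d → ℕ) (x : Fin d → ℝ) :
    eval x (Bpoly c δ) = ∏ i, (x i - c i) ^ δ i := by
  simp [Bpoly]

lemma pderiv_zero_mul {i : Fin d} {p q : MvPolynomial (Fin d) ℝ}
    (hp : pderiv i p = 0) (hq : pderiv i q = 0) : pderiv i (p * q) = 0 := by
  rw [pderiv_mul, hp, hq]; ring

lemma pderiv_XsubC_pow_ne {i j : Fin d} (h : j ≠ i) (a : ℝ) (n : ℕ) :
    pderiv i ((X j - C a) ^ n) = 0 := by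
  rw [Derivation.leibniz_pow]
  rw [map_sub, pderiv_X_of_ne h, pderiv_C]
  simp

lemma pderiv_Bpoly (c : Fin d → ℝ) (δ : Fin d → ℕ) (i : Fin d) :
    pderiv i (Bpoly c δ) =
      ((δ i : ℝ)) • Bpoly c (Function.update δ i (δ i - 1)) := by
  classical
  rw [Bpoly, ← Finset.mul_prod_erase Finset.univ _ (Finset.mem_univ i)]
  rw [pderiv_mul]
  have h1 : pderiv i (∏ j ∈ Finset.univ.erase i, (X j - C (c j)) ^ δ j) = 0 := by
    refine Finset.prod_induction _ (fun p => pderiv i p = 0) (fun p q => pderiv_zero_mul) (by simp) ?_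
    intro j hj
    exact pderiv_XsubC_pow_ne (Finset.ne_of_mem_erase hj) _ _
  rw [h1, mul_zero, add_zero]
  have h2 : pderiv i ((X i - C (c i)) ^ δ i) = (δ i : ℝ) • (X i - C (c i)) ^ (δ i - 1) := by
    rw [Derivation.leibniz_pow, map_sub, pderiv_X_self, pderiv_C]
    simp [Nat.cast_smul_eq_nsmul]
  rw [h2, Bpoly, ← Finset.mul_prod_erase Finset.univ _ (Finset.mem_univ i)]
  rw [Function.update_self]
  rw [smul_mul_assoc]
  congr 2
  exact Finset.prod_congr rfl fun j hj => by rw [Function.update_of_ne (Finset.ne_of_mem_erase hj)]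

lemma descFactorial_succ' (n k : ℕ) :
    n.descFactorial (k + 1) = n * (n - 1).descFactorial k := by
  cases n with
  | zero => simp
  | succ m => rw [Nat.succ_descFactorial_succ]; simp

lemma pderiv_pow_Bpoly (c : Fin d → ℝ) (δ : Fin d → ℕ) (i : Fin d) (n : ℕ) :
    (((pderiv i).toLinearMap : Module.End ℝ (MvPolynomial (Fin d) ℝ)) ^ n) (Bpoly c δ) =
      (((δ i).descFactorial n : ℝ)) • Bpoly c (Function.update δ i (δ i - n)) := by
  induction n generalizing δ with
  | zero => simp [Function.update_eq_self_iff.2 rfl]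
  | succ n ih =>
    rw [pow_succ, Module.End.mul_apply]
    have : ((pderiv i).toLinearMap : Module.End ℝ (MvPolynomial (Fin d) ℝ)) (Bpoly c δ)
        = ((δ i : ℝ)) • Bpoly c (Function.update δ i (δ i - 1)) := pderiv_Bpoly c δ i
    rw [this, _root_.map_smul, ih]
    rw [Function.update_idem, Function.update_self, smul_smul]
    rw [descFactorial_succ']
    rw [Nat.sub_sub]
    push_cast
    ring_nf

lemma list_prod_pderiv_Bpoly (c : Fin d → ℝ) (β : Fin d → ℕ) :
    ∀ (L : List (Fin d)), L.Nodup → ∀ (δ : Fin d → ℕ),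
    ((L.map fun i =>
        ((pderiv i).toLinearMap : Module.End ℝ (MvPolynomial (Fin d) ℝ)) ^ (β i)).prod) (Bpoly c δ)
      = ((∏ i ∈ L.toFinset, (δ i).descFactorial (β i) : ℕ) : ℝ) •
          Bpoly c (fun j => if j ∈ L then δ j - β j else δ j) := by
  classical
  intro L
  induction L with
  | nil => intro _ δ; simp
  | cons i L ih =>
    intro hnd δ
    have hi : i ∉ L := (List.nodup_cons.1 hnd).1
    have hL : L.Nodup := (List.nodup_cons.1 hnd).2
    rw [List.map_cons, List.prod_cons, Module.End.mul_apply, ih hL δ, _root_.map_smul,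
      pderiv_pow_Bpoly]
    have hδi : (if i ∈ L then δ i - β i else δ i) = δ i := by simp [hi]
    rw [hδi, smul_smul]
    congr 1
    · rw [List.toFinset_cons, Finset.prod_insert (by simpa using hi)]
      push_cast; ring
    · congr 1
      funext j
      rcases eq_or_ne j i with rfl | hji
      · simp [Function.update_self, hi]
      · rw [Function.update_of_ne hji]
        simp [List.mem_cons, hji]

lemma mderiv_Bpoly (c : Fin d → ℝ) (β δ : Fin d → ℕ) :
    mderiv d β (Bpoly c δ)
      = ((∏ i, (δ i).descFactorial (β i) : ℕ) : ℝ) • Bpoly c (δ - β) := by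
  rw [mderiv, list_prod_pderiv_Bpoly c β _ (List.nodup_finRange d) δ]
  congr 1
  · rw [List.toFinset_finRange]
  · congr 1
    funext j
    simp [List.mem_finRange, Pi.sub_apply]

noncomputable def Rfun (ℓ : ℝ) (n : ℕ) : ℝ := ((ℓ/2)^(n+1) - (-(ℓ/2))^(n+1))/(n+1)

lemma oneD' (a h : ℝ) (hh : 0 ≤ h) (n : ℕ) :
    ∫ t in Set.Icc (a - h) (a + h), (t - a)^n = Rfun (2*h) n := by
  rw [integral_Icc_eq_integral_Ioc,
    ← intervalIntegral.integral_of_le (by linarith : a - h ≤ a + h),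
    intervalIntegral.integral_comp_sub_right (fun t => t ^ n) a]
  have e1 : a - h - a = -h := by ring
  have e2 : a + h - a = h := by ring
  rw [e1, e2, integral_pow, Rfun]
  norm_num

lemma Rfun_zero (ℓ : ℝ) : Rfun ℓ 0 = ℓ := by simp [Rfun]

lemma Rfun_abs_le (ℓ : ℝ) (hℓ : 0 < ℓ) (n : ℕ) : |Rfun ℓ n| ≤ ℓ ^ (n + 1) := by
  rw [Rfun, abs_div]
  have h1 : |((ℓ/2)^(n+1) - (-(ℓ/2))^(n+1))| ≤ (ℓ/2)^(n+1) + (ℓ/2)^(n+1) := by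
    calc |((ℓ/2)^(n+1) - (-(ℓ/2))^(n+1))| ≤ |(ℓ/2)^(n+1)| + |(-(ℓ/2))^(n+1)| := abs_sub _ _
    _ = (ℓ/2)^(n+1) + (ℓ/2)^(n+1) := by
        rw [abs_pow, abs_pow, abs_neg, abs_of_pos (by linarith)]
  have h2 : |((n:ℝ) + 1)| = (n:ℝ) + 1 := abs_of_pos (by positivity)
  rw [h2]
  have h3 : (ℓ/2)^(n+1) + (ℓ/2)^(n+1) ≤ ℓ^(n+1) := by
    have : (ℓ/2)^(n+1) ≤ (ℓ/2) * ℓ^n := by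
      rw [pow_succ']
      exact mul_le_mul_of_nonneg_left (pow_le_pow_left₀ (by linarith) (by linarith) n) (by linarith)
    calc (ℓ/2)^(n+1) + (ℓ/2)^(n+1) ≤ (ℓ/2) * ℓ^n + (ℓ/2) * ℓ^n := by linarith
    _ = ℓ^(n+1) := by ring
  have h4 : (1:ℝ) ≤ (n:ℝ) + 1 := by
    have : (0:ℝ) ≤ n := Nat.cast_nonneg n
    linarith
  calc |((ℓ/2)^(n+1) - (-(ℓ/2))^(n+1))| / ((n:ℝ)+1) ≤ ℓ^(n+1) / ((n:ℝ)+1) := by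
        exact div_le_div_of_nonneg_right (h1.trans h3) (by linarith) |>.trans_eq rfl
  _ ≤ ℓ^(n+1) := by
        rw [div_le_iff₀ (by linarith)]
        nlinarith [pow_pos hℓ (n+1)]

lemma cube_eq_pi (c : Fin d → ℝ) (ℓ : ℝ) (hℓ : 0 < ℓ) :
    Metric.closedBall c (ℓ/2) = Set.pi Set.univ (fun i => Set.Icc (c i - ℓ/2) (c i + ℓ/2)) := by
  rw [closedBall_pi _ (by linarith : (0:ℝ) ≤ ℓ/2)]
  exact Set.pi_congr rfl (fun i _ => Real.closedBall_eq_Icc)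

lemma integral_cube_prod (c : Fin d → ℝ) (ℓ : ℝ) (hℓ : 0 < ℓ) (α : Fin d → ℕ) :
    ∫ x in Metric.closedBall c (ℓ/2), ∏ i, (x i - c i)^(α i) = ∏ i, Rfun ℓ (α i) := by
  classical
  rw [cube_eq_pi c ℓ hℓ]
  set S := fun i => Set.Icc (c i - ℓ/2) (c i + ℓ/2) with hS
  set g : (i : Fin d) → ℝ → ℝ := fun i => (S i).indicator (fun t => (t - c i)^(α i)) with hg
  have hmeas : MeasurableSet (Set.pi Set.univ S) :=
    MeasurableSet.univ_pi (fun i => measurableSet_Icc)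
  rw [← integral_indicator hmeas]
  have hind : (Set.pi Set.univ S).indicator (fun x => ∏ i, (x i - c i)^(α i))
      = fun x => ∏ i, g i (x i) := by
    funext x
    by_cases hx : x ∈ Set.pi Set.univ S
    · rw [Set.indicator_of_mem hx]
      refine (Finset.prod_congr rfl fun i _ => ?_)
      rw [hg]
      simp only
      rw [Set.indicator_of_mem (hx i (Set.mem_univ i))]
    · rw [Set.indicator_of_notMem hx]
      have : ∃ i, x i ∉ S i := by
        by_contra hcon
        push_neg at hcon
        exact hx (fun i _ => hcon i)
      obtain ⟨i, hi⟩ := this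
      symm
      apply Finset.prod_eq_zero (Finset.mem_univ i)
      rw [hg]
      simp only
      rw [Set.indicator_of_notMem hi]
  rw [hind]
  rw [integral_fintype_prod_volume_eq_prod g]
  refine Finset.prod_congr rfl fun i _ => ?_
  rw [hg]
  simp only
  rw [integral_indicator measurableSet_Icc]
  have h2 : 2 * (ℓ/2) = ℓ := by ring
  rw [oneD' (c i) (ℓ/2) (by linarith) (α i), h2]

lemma integral_eval_Bpoly (c : Fin d → ℝ) (ℓ : ℝ) (hℓ : 0 < ℓ) (α : Fin d → ℕ) :
    ∫ x in Metric.closedBall c (ℓ/2), eval x (Bpoly c α) = ∏ i, Rfun ℓ (α i) := by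
  have : (fun x : Fin d → ℝ => eval x (Bpoly c α)) = fun x => ∏ i, (x i - c i)^(α i) := by
    funext x; exact eval_Bpoly c α x
  rw [show (∫ x in Metric.closedBall c (ℓ/2), eval x (Bpoly c α))
      = ∫ x in Metric.closedBall c (ℓ/2), ∏ i, (x i - c i)^(α i) from by rw [← this]]
  exact integral_cube_prod c ℓ hℓ α

lemma key_identity (c : Fin d → ℝ) (ℓ : ℝ) (hℓ : 0 < ℓ) (m : (Fin d → ℕ) → ℝ)
    (G : Finset (Fin d → ℕ)) (γ : Fin d → ℕ) :
    ∫ x in Metric.closedBall c (ℓ/2), eval x (mderiv d γ (∑ δ ∈ G, m δ • Bpoly c δ))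
      = ∑ δ ∈ G, m δ * ((∏ i, (δ i).descFactorial (γ i) : ℕ) : ℝ) * ∏ i, Rfun ℓ ((δ - γ) i) := by
  have hlin : mderiv d γ (∑ δ ∈ G, m δ • Bpoly c δ)
      = ∑ δ ∈ G, m δ • (((∏ i, (δ i).descFactorial (γ i) : ℕ) : ℝ) • Bpoly c (δ - γ)) := by
    unfold mderiv
    rw [map_sum]
    refine Finset.sum_congr rfl fun δ _ => ?_
    rw [_root_.map_smul]
    congr 1
    exact mderiv_Bpoly c γ δ
  rw [hlin]
  have heval : ∀ x : Fin d → ℝ,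
      eval x (∑ δ ∈ G, m δ • (((∏ i, (δ i).descFactorial (γ i) : ℕ) : ℝ) • Bpoly c (δ - γ)))
      = ∑ δ ∈ G, m δ * ((∏ i, (δ i).descFactorial (γ i) : ℕ) : ℝ) * eval x (Bpoly c (δ - γ)) := by
    intro x
    rw [map_sum]
    refine Finset.sum_congr rfl fun δ _ => ?_
    rw [smul_eval, smul_eval]
    ring
  calc ∫ x in Metric.closedBall c (ℓ/2),
        eval x (∑ δ ∈ G, m δ • (((∏ i, (δ i).descFactorial (γ i) : ℕ) : ℝ) • Bpoly c (δ - γ)))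
      = ∫ x in Metric.closedBall c (ℓ/2),
          ∑ δ ∈ G, m δ * ((∏ i, (δ i).descFactorial (γ i) : ℕ) : ℝ) * eval x (Bpoly c (δ - γ)) := by
        congr 1; funext x; exact heval x
    _ = ∑ δ ∈ G, ∫ x in Metric.closedBall c (ℓ/2),
          m δ * ((∏ i, (δ i).descFactorial (γ i) : ℕ) : ℝ) * eval x (Bpoly c (δ - γ)) := by
        refine integral_finset_sum G fun δ _ => ?_
        refine (Continuous.continuousOn ?_).integrableOn_compact (isCompact_closedBall c (ℓ/2))
        exact (continuous_const.mul (continuous_eval (Bpoly c (δ - γ))))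
    _ = ∑ δ ∈ G, m δ * ((∏ i, (δ i).descFactorial (γ i) : ℕ) : ℝ) * ∏ i, Rfun ℓ ((δ - γ) i) := by
        refine Finset.sum_congr rfl fun δ _ => ?_
        rw [integral_const_mul, integral_eval_Bpoly c ℓ hℓ (δ - γ)]

end Stmt3Aux

open Stmt3Aux in
theorem stmt_3 (d k : ℕ) (hd : 1 ≤ d) :
    ∃ C : ℝ, 0 < C ∧
      ∀ (c : Fin d → ℝ) (ℓ : ℝ), 0 < ℓ →
      ∀ (Q : Set (Fin d → ℝ)), Q = Metric.closedBall c (ℓ / 2) →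
      ∀ (f : (Fin d → ℝ) → ℝ) (Df : (Fin d → ℕ) → (Fin d → ℝ) → ℝ),
        Df 0 = f →
        (∀ β : Fin d → ℕ, (∑ i, β i) < k → ∀ i : Fin d,
          HasWeakDerivOn (interior Q) (Df β) (Df (β + Pi.single i 1)) i) →
        (∀ β : Fin d → ℕ, (∑ i, β i) ≤ k → IntegrableOn (Df β) Q) →
      ∀ P : MvPolynomial (Fin d) ℝ, P.totalDegree ≤ k →
        (∀ β : Fin d → ℕ, (∑ i, β i) ≤ k →
          ∫ x in Q, MvPolynomial.eval x (mderiv d β P) = ∫ x in Q, Df β x) →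
      ∀ m : (Fin d → ℕ) → ℝ,
        (∀ y : Fin d → ℝ, MvPolynomial.eval y P =
          ∑ γ ∈ (Finset.range (k+1)).biUnion (multiIdxEq d),
            m γ * ∏ i, (y i - c i) ^ γ i) →
      ∀ γ : Fin d → ℕ, (∑ i, γ i) ≤ k →
        |m γ| ≤ C * ∑ j ∈ Finset.Icc (∑ i, γ i) k,
          (∑ β ∈ multiIdxEq d j, ∫ x in Q, |Df β x|) *
            ℓ ^ ((j : ℝ) - (∑ i, γ i : ℕ) - d) := by
  classical
  set G : Finset (Fin d → ℕ) := (Finset.range (k+1)).biUnion (multiIdxEq d) with hG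
  set K : ℝ := (((k+1)^k : ℕ) : ℝ)^d with hKdef
  have hK1 : (1:ℝ) ≤ K := by
    rw [hKdef]
    apply one_le_pow₀
    exact_mod_cast Nat.one_le_iff_ne_zero.2 (pow_pos (Nat.succ_pos k) k).ne'
  set D : ℝ := 1 + (G.card : ℝ) * K with hDdef
  have hGK0 : (0:ℝ) ≤ (G.card : ℝ) * K := mul_nonneg (Nat.cast_nonneg _) (by linarith)
  have hD1 : (1:ℝ) ≤ D := by rw [hDdef]; linarith
  refine ⟨D^(k+1), pow_pos (by linarith) (k+1), ?_⟩
  intro c ℓ hℓ Q hQ f Df hDf0 _hweak _hint P _hdeg hmatch m hm γ hγ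
  subst hQ
  -- membership
  have hmemEq : ∀ (δ : Fin d → ℕ) (j : ℕ), δ ∈ multiIdxEq d j ↔ (∑ i, δ i) = j := by
    intro δ j
    constructor
    · intro h; exact (Finset.mem_filter.1 h).2
    · intro h
      refine Finset.mem_filter.2 ⟨Fintype.mem_piFinset.2 fun i => Finset.mem_range.2 ?_, h⟩
      have : δ i ≤ ∑ i', δ i' := Finset.single_le_sum (fun i' _ => Nat.zero_le _) (Finset.mem_univ i)
      omega
  have hmemG : ∀ δ : Fin d → ℕ, δ ∈ G ↔ (∑ i, δ i) ≤ k := by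
    intro δ; rw [hG, Finset.mem_biUnion]
    constructor
    · rintro ⟨j, hj, hδ⟩; rw [(hmemEq δ j).1 hδ]; exact Nat.lt_succ_iff.1 (Finset.mem_range.1 hj)
    · intro h; exact ⟨∑ i, δ i, Finset.mem_range.2 (Nat.lt_succ_of_le h), (hmemEq _ _).2 rfl⟩
  -- P as sum
  have hPsum : P = ∑ δ ∈ G, m δ • Stmt3Aux.Bpoly c δ := by
    apply MvPolynomial.funext
    intro x
    rw [hm x, map_sum]
    refine Finset.sum_congr rfl fun δ _ => ?_
    rw [MvPolynomial.smul_eval, Stmt3Aux.eval_Bpoly]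
  have hS_nonneg : ∀ j : ℕ, 0 ≤ ∑ β ∈ multiIdxEq d j, ∫ x in Metric.closedBall c (ℓ/2), |Df β x| :=
    fun j => Finset.sum_nonneg fun β _ => integral_nonneg (fun x => abs_nonneg _)
  set S : ℕ → ℝ := fun j => ∑ β ∈ multiIdxEq d j, ∫ x in Metric.closedBall c (ℓ/2), |Df β x| with hSdef
  set RHS : (Fin d → ℕ) → ℝ :=
    fun γ' => ∑ j ∈ Finset.Icc (∑ i, γ' i) k, S j * ℓ ^ ((j : ℝ) - ((∑ i, γ' i : ℕ) : ℝ) - d)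
    with hRHSdef
  have hrpow_pos : ∀ r : ℝ, 0 < ℓ ^ r := fun r => Real.rpow_pos_of_pos hℓ r
  have hRHS_nonneg : ∀ γ', 0 ≤ RHS γ' :=
    fun γ' => Finset.sum_nonneg fun j _ => mul_nonneg (hS_nonneg j) (hrpow_pos _).le
  -- key identity
  have hkey : ∀ γ' : Fin d → ℕ, (∑ i, γ' i) ≤ k →
      (∫ x in Metric.closedBall c (ℓ/2), Df γ' x)
        = ∑ δ ∈ G, m δ * ((∏ i, (δ i).descFactorial (γ' i) : ℕ) : ℝ)
            * ∏ i, Stmt3Aux.Rfun ℓ ((δ - γ') i) := by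
    intro γ' hγ'
    rw [← hmatch γ' hγ', hPsum]
    exact Stmt3Aux.key_identity c ℓ hℓ m G γ'
  have hld : (0:ℝ) < ℓ^d := pow_pos hℓ d
  -- main inequality
  have hmain : ∀ γ' : Fin d → ℕ, (∑ i, γ' i) ≤ k →
      |m γ'| ≤ (ℓ^d)⁻¹ * |∫ x in Metric.closedBall c (ℓ/2), Df γ' x|
        + ∑ δ ∈ (G.erase γ').filter (fun δ => γ' ≤ δ), |m δ| * K * ℓ ^ (∑ i, (δ i - γ' i)) := by
    intro γ' hγ'
    set T := (G.erase γ').filter (fun δ => γ' ≤ δ) with hT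
    set A : (Fin d → ℕ) → ℝ := fun δ =>
      m δ * ((∏ i, (δ i).descFactorial (γ' i) : ℕ) : ℝ) * ∏ i, Stmt3Aux.Rfun ℓ ((δ - γ') i) with hA
    have hγ'G : γ' ∈ G := (hmemG γ').2 hγ'
    have hsplit : A γ' + ∑ δ ∈ G.erase γ', A δ = ∫ x in Metric.closedBall c (ℓ/2), Df γ' x := by
      rw [Finset.add_sum_erase G A hγ'G]
      exact (hkey γ' hγ').symm
    have herase : ∑ δ ∈ G.erase γ', A δ = ∑ δ ∈ T, A δ := by
      symm
      apply Finset.sum_subset (Finset.filter_subset _ _)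
      intro δ hδ hδT
      have hnle : ¬ γ' ≤ δ := fun hle => hδT (Finset.mem_filter.2 ⟨hδ, hle⟩)
      rw [Pi.le_def] at hnle; push_neg at hnle
      obtain ⟨i, hi⟩ := hnle
      have h0 : (δ i).descFactorial (γ' i) = 0 := Nat.descFactorial_eq_zero_iff_lt.2 hi
      rw [hA]; simp only
      rw [Finset.prod_eq_zero (Finset.mem_univ i) h0]
      norm_num
    have hAγ : A γ' = m γ' * ((∏ i, (γ' i).factorial : ℕ) : ℝ) * ℓ^d := by
      rw [hA]; simp only
      have e1 : (∏ i, (γ' i).descFactorial (γ' i)) = ∏ i, (γ' i).factorial :=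
        Finset.prod_congr rfl fun i _ => Nat.descFactorial_self (γ' i)
      have e2 : (∏ i, Stmt3Aux.Rfun ℓ ((γ' - γ') i)) = ℓ^d := by
        have : ∀ i : Fin d, Stmt3Aux.Rfun ℓ ((γ' - γ') i) = ℓ := by
          intro i
          rw [Pi.sub_apply, Nat.sub_self, Stmt3Aux.Rfun_zero]
        rw [Finset.prod_congr rfl fun i _ => this i, Finset.prod_const, Finset.card_univ,
          Fintype.card_fin]
      rw [e1, e2]
    -- coefficient bounds
    have hcγ1 : (1:ℝ) ≤ ((∏ i, (γ' i).factorial : ℕ) : ℝ) := by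
      have : 1 ≤ ∏ i, (γ' i).factorial := Nat.one_le_iff_ne_zero.2 (by
        apply Finset.prod_ne_zero_iff.2
        intro i _
        exact (Nat.factorial_pos _).ne')
      exact_mod_cast this
    have hAbound : ∀ δ ∈ T, |A δ| ≤ |m δ| * K * ℓ ^ (∑ i, (δ i - γ' i)) * ℓ^d := by
      intro δ hδ
      have hδG : δ ∈ G := Finset.mem_of_mem_erase (Finset.mem_filter.1 hδ).1
      have hδk : (∑ i, δ i) ≤ k := (hmemG δ).1 hδG
      have hcf : ((∏ i, (δ i).descFactorial (γ' i) : ℕ) : ℝ) ≤ K := by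
        rw [hKdef]
        have hn : (∏ i, (δ i).descFactorial (γ' i)) ≤ ((k+1)^k)^d := by
          calc (∏ i, (δ i).descFactorial (γ' i)) ≤ ∏ _i : Fin d, (k+1)^k := by
                apply Finset.prod_le_prod'
                intro i _
                have hδi : δ i ≤ k := le_trans
                  (Finset.single_le_sum (fun i' _ => Nat.zero_le _) (Finset.mem_univ i)) hδk
                have hγi : γ' i ≤ k := le_trans
                  (Finset.single_le_sum (fun i' _ => Nat.zero_le _) (Finset.mem_univ i)) hγ'
                calc (δ i).descFactorial (γ' i) ≤ (δ i) ^ (γ' i) := Nat.descFactorial_le_pow _ _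
                _ ≤ (k+1) ^ (γ' i) := Nat.pow_le_pow_left (by omega) _
                _ ≤ (k+1) ^ k := Nat.pow_le_pow_right (by omega) hγi
          _ = ((k+1)^k)^d := by rw [Finset.prod_const, Finset.card_univ, Fintype.card_fin]
        calc ((∏ i, (δ i).descFactorial (γ' i) : ℕ) : ℝ) ≤ ((((k+1)^k)^d : ℕ) : ℝ) :=
              Nat.cast_le.2 hn
        _ = (((k+1)^k : ℕ) : ℝ)^d := by push_cast; ring
      have hprod : |∏ i, Stmt3Aux.Rfun ℓ ((δ - γ') i)| ≤ ℓ ^ (∑ i, (δ i - γ' i)) * ℓ^d := by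
        rw [Finset.abs_prod]
        calc (∏ i, |Stmt3Aux.Rfun ℓ ((δ - γ') i)|) ≤ ∏ i, ℓ ^ ((δ - γ') i + 1) := by
              apply Finset.prod_le_prod (fun i _ => abs_nonneg _)
              intro i _
              exact Stmt3Aux.Rfun_abs_le ℓ hℓ _
        _ = ℓ ^ (∑ i, ((δ - γ') i + 1)) := by rw [Finset.prod_pow_eq_pow_sum]
        _ = ℓ ^ (∑ i, (δ i - γ' i)) * ℓ^d := by
              rw [Finset.sum_add_distrib, Finset.sum_const, Finset.card_univ, Fintype.card_fin,
                pow_add]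
              simp [Pi.sub_apply]
      rw [hA]; simp only
      rw [abs_mul, abs_mul]
      have habs_cf : |((∏ i, (δ i).descFactorial (γ' i) : ℕ) : ℝ)|
          = ((∏ i, (δ i).descFactorial (γ' i) : ℕ) : ℝ) := abs_of_nonneg (Nat.cast_nonneg _)
      rw [habs_cf]
      calc |m δ| * ((∏ i, (δ i).descFactorial (γ' i) : ℕ) : ℝ) * |∏ i, Stmt3Aux.Rfun ℓ ((δ - γ') i)|
          ≤ |m δ| * K * (ℓ ^ (∑ i, (δ i - γ' i)) * ℓ^d) := by
            apply mul_le_mul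
            · exact mul_le_mul_of_nonneg_left hcf (abs_nonneg _)
            · exact hprod
            · exact abs_nonneg _
            · positivity
      _ = |m δ| * K * ℓ ^ (∑ i, (δ i - γ' i)) * ℓ^d := by ring
    -- combine
    have heq : m γ' * ((∏ i, (γ' i).factorial : ℕ) : ℝ) * ℓ^d
        = (∫ x in Metric.closedBall c (ℓ/2), Df γ' x) - ∑ δ ∈ T, A δ := by
      rw [← hAγ, ← herase]
      linarith [hsplit]
    have habs : |m γ'| * (((∏ i, (γ' i).factorial : ℕ) : ℝ) * ℓ^d)
        ≤ |∫ x in Metric.closedBall c (ℓ/2), Df γ' x| + ∑ δ ∈ T, |A δ| := by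
      have h1 : |m γ' * ((∏ i, (γ' i).factorial : ℕ) : ℝ) * ℓ^d|
          = |m γ'| * (((∏ i, (γ' i).factorial : ℕ) : ℝ) * ℓ^d) := by
        rw [abs_mul, abs_mul, abs_of_nonneg (Nat.cast_nonneg _ : (0:ℝ) ≤ _),
          abs_of_pos hld, mul_assoc]
      rw [← h1, heq]
      calc |(∫ x in Metric.closedBall c (ℓ/2), Df γ' x) - ∑ δ ∈ T, A δ|
          ≤ |∫ x in Metric.closedBall c (ℓ/2), Df γ' x| + |∑ δ ∈ T, A δ| := abs_sub _ _
      _ ≤ |∫ x in Metric.closedBall c (ℓ/2), Df γ' x| + ∑ δ ∈ T, |A δ| := by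
            gcongr
            exact Finset.abs_sum_le_sum_abs _ _
    have hsum_bound : ∑ δ ∈ T, |A δ|
        ≤ (∑ δ ∈ T, |m δ| * K * ℓ ^ (∑ i, (δ i - γ' i))) * ℓ^d := by
      rw [Finset.sum_mul]
      exact Finset.sum_le_sum hAbound
    have hchain : |m γ'| * ℓ^d
        ≤ |∫ x in Metric.closedBall c (ℓ/2), Df γ' x|
          + (∑ δ ∈ T, |m δ| * K * ℓ ^ (∑ i, (δ i - γ' i))) * ℓ^d := by
      have h2 : |m γ'| * ℓ^d ≤ |m γ'| * (((∏ i, (γ' i).factorial : ℕ) : ℝ) * ℓ^d) := by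
        apply mul_le_mul_of_nonneg_left ?_ (abs_nonneg _)
        nlinarith
      linarith [habs, hsum_bound]
    rw [← mul_le_mul_iff_of_pos_right hld]
    have hexp : ((ℓ^d)⁻¹ * |∫ x in Metric.closedBall c (ℓ/2), Df γ' x|
        + ∑ δ ∈ T, |m δ| * K * ℓ ^ (∑ i, (δ i - γ' i))) * ℓ^d
        = |∫ x in Metric.closedBall c (ℓ/2), Df γ' x|
          + (∑ δ ∈ T, |m δ| * K * ℓ ^ (∑ i, (δ i - γ' i))) * ℓ^d := by
      rw [add_mul, mul_comm (ℓ^d)⁻¹, inv_mul_cancel_right₀ hld.ne']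
    rw [hexp]
    exact hchain
  -- first-term bound
  have hfirst : ∀ γ' : Fin d → ℕ, (∑ i, γ' i) ≤ k →
      (ℓ^d)⁻¹ * |∫ x in Metric.closedBall c (ℓ/2), Df γ' x| ≤ RHS γ' := by
    intro γ' hγ'
    have h1 : |∫ x in Metric.closedBall c (ℓ/2), Df γ' x|
        ≤ ∫ x in Metric.closedBall c (ℓ/2), |Df γ' x| := by
      simpa [Real.norm_eq_abs] using
        norm_integral_le_integral_norm (μ := volume.restrict (Metric.closedBall c (ℓ/2))) (Df γ')
    have h2 : (∫ x in Metric.closedBall c (ℓ/2), |Df γ' x|) ≤ S (∑ i, γ' i) := by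
      rw [hSdef]
      exact Finset.single_le_sum (f := fun β => ∫ x in Metric.closedBall c (ℓ/2), |Df β x|)
        (fun β _ => integral_nonneg fun x => abs_nonneg _) ((hmemEq γ' _).2 rfl)
    have h3 : ℓ ^ (((∑ i, γ' i : ℕ) : ℝ) - ((∑ i, γ' i : ℕ) : ℝ) - d) = (ℓ^d)⁻¹ := by
      rw [show (((∑ i, γ' i : ℕ) : ℝ) - ((∑ i, γ' i : ℕ) : ℝ) - d) = -(d:ℝ) by ring,
        Real.rpow_neg hℓ.le, Real.rpow_natCast]
    calc (ℓ^d)⁻¹ * |∫ x in Metric.closedBall c (ℓ/2), Df γ' x|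
        ≤ (ℓ^d)⁻¹ * S (∑ i, γ' i) := by
          apply mul_le_mul_of_nonneg_left (h1.trans h2) (by positivity)
    _ = S (∑ i, γ' i) * ℓ ^ (((∑ i, γ' i : ℕ) : ℝ) - ((∑ i, γ' i : ℕ) : ℝ) - d) := by
          rw [h3]; ring
    _ ≤ RHS γ' := by
          rw [hRHSdef]
          exact Finset.single_le_sum
            (f := fun j => S j * ℓ ^ ((j : ℝ) - ((∑ i, γ' i : ℕ) : ℝ) - d))
            (fun j _ => mul_nonneg (hS_nonneg j) (hrpow_pos _).le)
            (Finset.mem_Icc.2 ⟨le_refl _, hγ'⟩)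
  -- monotone RHS shift bound
  have hshift : ∀ (γ' δ : Fin d → ℕ), (∑ i, γ' i) < (∑ i, δ i) → (∑ i, δ i) ≤ k →
      RHS δ * ℓ ^ ((∑ i, δ i) - (∑ i, γ' i)) ≤ RHS γ' := by
    intro γ' δ hlt hle
    rw [hRHSdef]
    simp only
    rw [Finset.sum_mul]
    have hterm : ∀ j ∈ Finset.Icc (∑ i, δ i) k,
        S j * ℓ ^ ((j : ℝ) - ((∑ i, δ i : ℕ) : ℝ) - d) * ℓ ^ ((∑ i, δ i) - (∑ i, γ' i))
        = S j * ℓ ^ ((j : ℝ) - ((∑ i, γ' i : ℕ) : ℝ) - d) := by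
      intro j _
      rw [mul_assoc]
      congr 1
      rw [← Real.rpow_natCast ℓ ((∑ i, δ i) - (∑ i, γ' i)), ← Real.rpow_add hℓ]
      congr 1
      rw [Nat.cast_sub hlt.le]
      ring
    rw [Finset.sum_congr rfl hterm]
    apply Finset.sum_le_sum_of_subset_of_nonneg
    · exact Finset.Icc_subset_Icc_left hlt.le
    · intro j _ _
      exact mul_nonneg (hS_nonneg j) (hrpow_pos _).le
  -- the induction
  have claim : ∀ N : ℕ, ∀ γ' : Fin d → ℕ, (∑ i, γ' i) ≤ k → k - (∑ i, γ' i) < N →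
      |m γ'| ≤ D ^ (k - (∑ i, γ' i) + 1) * RHS γ' := by
    intro N
    induction N with
    | zero => intro γ' _ h; omega
    | succ N ih =>
      intro γ' hγ' hN
      have hstep := hmain γ' hγ'
      set T := (G.erase γ').filter (fun δ => γ' ≤ δ) with hT
      have hsum2 : ∑ δ ∈ T, |m δ| * K * ℓ ^ (∑ i, (δ i - γ' i))
          ≤ (G.card : ℝ) * (K * (D ^ (k - (∑ i, γ' i)) * RHS γ')) := by
        have hbd : ∀ δ ∈ T, |m δ| * K * ℓ ^ (∑ i, (δ i - γ' i))
            ≤ K * (D ^ (k - (∑ i, γ' i)) * RHS γ') := by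
          intro δ hδ
          have hδG : δ ∈ G := Finset.mem_of_mem_erase (Finset.mem_filter.1 hδ).1
          have hδk : (∑ i, δ i) ≤ k := (hmemG δ).1 hδG
          have hle : γ' ≤ δ := (Finset.mem_filter.1 hδ).2
          have hne : δ ≠ γ' := Finset.ne_of_mem_erase (Finset.mem_filter.1 hδ).1
          have hlt : (∑ i, γ' i) < (∑ i, δ i) := by
            have hlesum : ∀ i, γ' i ≤ δ i := hle
            have hex : ∃ i, γ' i < δ i := by
              by_contra hcon
              push_neg at hcon
              exact hne (funext fun i => le_antisymm (hcon i) (hlesum i))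
            obtain ⟨i0, hi0⟩ := hex
            exact Finset.sum_lt_sum (fun i _ => hlesum i) ⟨i0, Finset.mem_univ i0, hi0⟩
          have hsub : (∑ i, (δ i - γ' i)) = (∑ i, δ i) - (∑ i, γ' i) := by
            have h1 : (∑ i, (δ i - γ' i)) + (∑ i, γ' i) = ∑ i, δ i := by
              rw [← Finset.sum_add_distrib]
              exact Finset.sum_congr rfl fun i _ => Nat.sub_add_cancel (hle i)
            omega
          have hIH : |m δ| ≤ D ^ (k - (∑ i, δ i) + 1) * RHS δ := by
            apply ih δ hδk
            omega
          have hpow : D ^ (k - (∑ i, δ i) + 1) ≤ D ^ (k - (∑ i, γ' i)) := by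
            apply pow_le_pow_right₀ hD1
            omega
          calc |m δ| * K * ℓ ^ (∑ i, (δ i - γ' i))
              ≤ (D ^ (k - (∑ i, δ i) + 1) * RHS δ) * K * ℓ ^ (∑ i, (δ i - γ' i)) := by
                apply mul_le_mul_of_nonneg_right
                  (mul_le_mul_of_nonneg_right hIH (by linarith)) (by positivity)
          _ = D ^ (k - (∑ i, δ i) + 1) * K * (RHS δ * ℓ ^ (∑ i, (δ i - γ' i))) := by ring
          _ ≤ D ^ (k - (∑ i, δ i) + 1) * K * RHS γ' := by
                apply mul_le_mul_of_nonneg_left ?_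
                  (mul_nonneg (pow_nonneg (by linarith) _) (by linarith))
                rw [hsub]
                exact hshift γ' δ hlt hδk
          _ ≤ K * (D ^ (k - (∑ i, γ' i)) * RHS γ') := by
                have := mul_le_mul_of_nonneg_right hpow (hRHS_nonneg γ')
                nlinarith [hRHS_nonneg γ', hK1]
        calc ∑ δ ∈ T, |m δ| * K * ℓ ^ (∑ i, (δ i - γ' i))
            ≤ ∑ _δ ∈ T, K * (D ^ (k - (∑ i, γ' i)) * RHS γ') := Finset.sum_le_sum hbd
        _ = (T.card : ℝ) * (K * (D ^ (k - (∑ i, γ' i)) * RHS γ')) := by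
              rw [Finset.sum_const, nsmul_eq_mul]
        _ ≤ (G.card : ℝ) * (K * (D ^ (k - (∑ i, γ' i)) * RHS γ')) := by
              apply mul_le_mul_of_nonneg_right ?_
                (mul_nonneg (by linarith)
                  (mul_nonneg (pow_nonneg (by linarith) _) (hRHS_nonneg γ')))
              exact_mod_cast Finset.card_le_card
                ((Finset.filter_subset _ _).trans (Finset.erase_subset _ _))
      have hDpow1 : (1:ℝ) ≤ D ^ (k - (∑ i, γ' i)) := one_le_pow₀ hD1
      have hfinal : |m γ'| ≤ RHS γ' + (G.card : ℝ) * (K * (D ^ (k - (∑ i, γ' i)) * RHS γ')) := by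
        have := hfirst γ' hγ'
        linarith [hstep, hsum2]
      have hexp2 : D ^ (k - (∑ i, γ' i) + 1) * RHS γ'
          = D ^ (k - (∑ i, γ' i)) * RHS γ'
            + (G.card : ℝ) * (K * (D ^ (k - (∑ i, γ' i)) * RHS γ')) := by
        rw [pow_succ, hDdef]; ring
      have h4 : RHS γ' ≤ D ^ (k - (∑ i, γ' i)) * RHS γ' :=
        le_mul_of_one_le_left (hRHS_nonneg γ') hDpow1
      rw [hexp2]
      linarith [hfinal]
  -- conclude
  have hfin := claim (k + 1) γ hγ (by omega)
  have hmono : D ^ (k - (∑ i, γ i) + 1) * RHS γ ≤ D ^ (k+1) * RHS γ := by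
    apply mul_le_mul_of_nonneg_right ?_ (hRHS_nonneg γ)
    apply pow_le_pow_right₀ hD1
    omega
  have hconv : RHS γ = ∑ j ∈ Finset.Icc (∑ i, γ i) k,
      (∑ β ∈ multiIdxEq d j, ∫ x in Metric.closedBall c (ℓ / 2), |Df β x|) *
        ℓ ^ ((j : ℝ) - (∑ i, γ i : ℕ) - d) := by
    rw [hRHSdef]
  rw [← hconv]
  exact hfin.trans hmono
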